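/- arXiv:2104.08411 — 2 statements merged into one kernel-verified Lean document; each statement's English description precedes it below -/
import Mathlib

section
/- The space BMO^w(ℝⁿ), equipped with the norm ‖f‖_{BMO^w} = ‖mf‖_∞ + ‖Mf‖_∞, is a complete normed space: every Cauchy sequence in this norm converges in BMO^w. -/
open MeasureTheory ENNReal Filter

/-- A (hyper)cube in ℝⁿ. -/
def IsCube {n : ℕ} (Q : Set (Fin n → ℝ)) : Prop :=
  ∃ (a : Fin n → ℝ) (r : ℝ), 0 < r ∧ Q = Set.Icc a (fun i => a i + r)

/-- The `BMO^w` norm `‖f‖ = ‖mf‖_∞ + ‖Mf‖_∞ = sup_Q f_Q + sup_Q |⨍_Q (f − f_Q)|`,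
with `f_Q = |⨍_Q f|`. -/
noncomputable def BMOwNorm {n : ℕ} (f : (Fin n → ℝ) → ℝ) : ℝ≥0∞ :=
  (⨆ (Q : Set (Fin n → ℝ)) (_ : IsCube Q), ENNReal.ofReal |⨍ ξ in Q, f ξ|) +
  (⨆ (Q : Set (Fin n → ℝ)) (_ : IsCube Q),
    ENNReal.ofReal |⨍ ξ in Q, (f ξ - |⨍ η in Q, f η|)|)

/-!
For locally integrable `f`, the `BMO^w` norm is equivalent to the `L^∞` norm:
`‖f‖_∞ ≤ sup_Q f_Q ≤ ‖f‖_{BMO^w}` because by Lebesgue's differentiation theorem `f(x)` is a.e. the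
limit of its averages over the cubes (sup-metric balls) shrinking to `x`, and
`‖f‖_{BMO^w} ≤ ‖f‖_∞ + 2‖f‖_∞` trivially. Completeness of `BMO^w` is then that of `L^∞`.
-/

open Metric Topology

section Average

variable {α E : Type*} [MeasurableSpace α] [NormedAddCommGroup E] [NormedSpace ℝ E]

theorem enorm_average_le_of_ae_enorm_le {μ : Measure α} {f : α → E} {C : ℝ≥0∞}
    (h : ∀ᵐ x ∂μ, ‖f x‖ₑ ≤ C) : ‖⨍ x, f x ∂μ‖ₑ ≤ C :=
  calc ‖⨍ x, f x ∂μ‖ₑ ≤ ⨍⁻ x, ‖f x‖ₑ ∂μ := by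
        rw [average_eq', laverage_eq']; exact enorm_integral_le_lintegral_enorm _
    _ ≤ essSup (‖f ·‖ₑ) μ := laverage_le_essSup _
    _ ≤ C := essSup_le_of_ae_le C h

theorem enorm_setAverage_le_of_ae_enorm_le {μ : Measure α} {f : α → E} {C : ℝ≥0∞}
    (h : ∀ᵐ x ∂μ, ‖f x‖ₑ ≤ C) (s : Set α) : ‖⨍ x in s, f x ∂μ‖ₑ ≤ C :=
  enorm_average_le_of_ae_enorm_le (ae_restrict_of_ae h)

end Average

theorem eLpNorm_top_le_of_forall_enorm_setAverage_closedBall_le {α E : Type*} [PseudoMetricSpace α]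
    [SecondCountableTopology α] [MeasurableSpace α] [BorelSpace α] {μ : Measure α}
    [IsLocallyFiniteMeasure μ] [IsUnifLocDoublingMeasure μ] [NormedAddCommGroup E]
    [NormedSpace ℝ E] [CompleteSpace E] {f : α → E} (hf : LocallyIntegrable f μ) {C : ℝ≥0∞}
    (h : ∀ x, ∀ r > 0, ‖⨍ y in closedBall x r, f y ∂μ‖ₑ ≤ C) : eLpNorm f ⊤ μ ≤ C := by
  rw [eLpNorm_exponent_top, eLpNormEssSup]
  refine essSup_le_of_ae_le C ?_
  filter_upwards [IsUnifLocDoublingMeasure.ae_tendsto_average (μ := μ) hf 1] with x hx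
  have hlim : Tendsto (fun r => ⨍ y in closedBall x r, f y ∂μ) (𝓝[>] 0) (𝓝 (f x)) :=
    hx (fun _ => x) id tendsto_id <| eventually_nhdsWithin_of_forall fun r hr => by
      simpa using (Set.mem_Ioi.mp hr).le
  exact le_of_tendsto hlim.enorm (eventually_nhdsWithin_of_forall (h x))

section Cube

variable {n : ℕ}

theorem isCube_closedBall (x : Fin n → ℝ) {r : ℝ} (hr : 0 < r) : IsCube (closedBall x r) := by
  refine ⟨fun i => x i - r, 2 * r, by positivity, ?_⟩
  rw [closedBall_pi x hr.le, ← Set.pi_univ_Icc]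
  congr! 2 with i
  rw [Real.closedBall_eq_Icc]
  ring_nf

theorem eLpNorm_top_le_BMOwNorm {f : (Fin n → ℝ) → ℝ} (hf : LocallyIntegrable f volume) :
    eLpNorm f ⊤ volume ≤ BMOwNorm f := by
  refine le_trans ?_ le_self_add
  refine eLpNorm_top_le_of_forall_enorm_setAverage_closedBall_le hf fun x r hr => ?_
  rw [Real.enorm_eq_ofReal_abs]
  exact le_iSup₂_of_le (closedBall x r) (isCube_closedBall x hr) le_rfl

theorem BMOwNorm_le_three_mul_eLpNorm_top (f : (Fin n → ℝ) → ℝ) :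
    BMOwNorm f ≤ 3 * eLpNorm f ⊤ volume := by
  set E := eLpNorm f ⊤ volume
  have hf : ∀ᵐ x ∂volume, ‖f x‖ₑ ≤ E := by
    simpa only [E, eLpNorm_exponent_top] using ae_le_eLpNormEssSup
  have havg (Q : Set (Fin n → ℝ)) : ‖⨍ ξ in Q, f ξ‖ₑ ≤ E :=
    enorm_setAverage_le_of_ae_enorm_le hf Q
  have hosc (Q : Set (Fin n → ℝ)) : ‖⨍ ξ in Q, (f ξ - |⨍ η in Q, f η|)‖ₑ ≤ 2 * E := by
    refine enorm_setAverage_le_of_ae_enorm_le ?_ Q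
    filter_upwards [hf] with x hx
    calc ‖f x - |⨍ η in Q, f η|‖ₑ ≤ ‖f x‖ₑ + ‖|⨍ η in Q, f η|‖ₑ := enorm_sub_le
      _ = ‖f x‖ₑ + ‖⨍ η in Q, f η‖ₑ := by simp only [Real.enorm_eq_ofReal_abs, abs_abs]
      _ ≤ 2 * E := by rw [two_mul]; exact add_le_add hx (havg Q)
  simp only [BMOwNorm, ← Real.enorm_eq_ofReal_abs]
  calc _ ≤ E + 2 * E := add_le_add (iSup₂_le fun Q _ => havg Q) (iSup₂_le fun Q _ => hosc Q)
    _ = 3 * E := by ring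

end Cube

theorem exists_memLp_tendsto_eLpNorm_sub_of_cauchy {α E : Type*} [MeasurableSpace α]
    {μ : Measure α} [NormedAddCommGroup E] [CompleteSpace E] {p : ℝ≥0∞} [Fact (1 ≤ p)]
    {f : ℕ → α → E} (hf : ∀ k, MemLp (f k) p μ)
    (hcauchy : ∀ ε : ℝ, 0 < ε → ∃ N : ℕ, ∀ i ≥ N, ∀ j ≥ N,
      eLpNorm (f i - f j) p μ < ENNReal.ofReal ε) :
    ∃ g : α → E, MemLp g p μ ∧ Tendsto (fun k => eLpNorm (f k - g) p μ) atTop (𝓝 0) := by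
  have hF : CauchySeq fun k => (hf k).toLp (f k) := by
    refine Metric.cauchySeq_iff.mpr fun ε hε => (hcauchy ε hε).imp fun N hN i hi j hj => ?_
    rw [dist_edist, Lp.edist_toLp_toLp]
    exact toReal_lt_of_lt_ofReal (hN i hi j hj)
  obtain ⟨G, hG⟩ := cauchySeq_tendsto_of_complete hF
  rw [← Lp.toLp_coeFn G (Lp.memLp G)] at hG
  exact ⟨G, Lp.memLp G, (Lp.tendsto_Lp_iff_tendsto_eLpNorm'' _ hf _ _).mp hG⟩

/-- Completeness of `BMO^w`: every Cauchy sequence (in the `BMO^w` norm) of functions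
of finite `BMO^w` norm converges in the `BMO^w` norm to a function in `BMO^w`. -/
theorem stmt4 {n : ℕ} (f : ℕ → (Fin n → ℝ) → ℝ)
    (hloc : ∀ k, LocallyIntegrable (f k) volume)
    (hfin : ∀ k, BMOwNorm (f k) < ⊤)
    (hcauchy : ∀ ε : ℝ, 0 < ε → ∃ N : ℕ, ∀ p ≥ N, ∀ q ≥ N,
      BMOwNorm (f p - f q) < ENNReal.ofReal ε) :
    ∃ g : (Fin n → ℝ) → ℝ, LocallyIntegrable g volume ∧ BMOwNorm g < ⊤ ∧
      Tendsto (fun k => BMOwNorm (f k - g)) atTop (nhds 0) := by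
  have hmem k : MemLp (f k) ⊤ volume :=
    ⟨(hloc k).aestronglyMeasurable, (eLpNorm_top_le_BMOwNorm (hloc k)).trans_lt (hfin k)⟩
  have : Fact ((1 : ℝ≥0∞) ≤ ⊤) := ⟨le_top⟩
  obtain ⟨g, hg, hlim⟩ := exists_memLp_tendsto_eLpNorm_sub_of_cauchy hmem fun ε hε =>
    (hcauchy ε hε).imp fun N hN p hp q hq =>
      (eLpNorm_top_le_BMOwNorm ((hloc p).sub (hloc q))).trans_lt (hN p hp q hq)
  refine ⟨g, hg.locallyIntegrable le_top, ?_, ?_⟩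
  · exact (BMOwNorm_le_three_mul_eLpNorm_top g).trans_lt (mul_lt_top ofNat_lt_top hg.eLpNorm_lt_top)
  · have h3 := ENNReal.Tendsto.const_mul hlim (Or.inr (ofNat_ne_top : (3 : ℝ≥0∞) ≠ ⊤))
    rw [mul_zero] at h3
    exact tendsto_of_tendsto_of_tendsto_of_le_of_le tendsto_const_nhds h3 (fun _ => zero_le)
      fun k => BMOwNorm_le_three_mul_eLpNorm_top _
end

section
/- Let T be a bounded linear functional on the special atom space B¹ on an interval J, with |T(f)| ≤ C‖f‖_{B¹}. Define G(x) = T(χ_{[x−h, x+h)}) appropriately via the atoms; then G is absolutely continuous on J: for any finite collection of pairwise disjoint subintervals (x_n, y_n) of J, Σ|G(y_n) − G(x_n)| ≤ 2C Σ(y_n − x_n). -/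
open MeasureTheory

/-- A special atom (half-open version): `b = (1/(2h))(χ_{[c,c+h)} − χ_{[c−h,c)})`. -/
def IsSpecialAtom (b : ℝ → ℝ) : Prop :=
  ∃ c h : ℝ, 0 < h ∧
    b = fun ξ => (1 / (2 * h)) *
      ((Set.Ico c (c + h)).indicator (fun _ => (1 : ℝ)) ξ -
       (Set.Ico (c - h) c).indicator (fun _ => (1 : ℝ)) ξ)

/-- Absolute continuity of `G(x) = T(χ_{[x−h,x+h)})` built from a bounded linear
functional `T` on the special atom space: since every special atom has `B¹`-norm at most
one, `|T(b)| ≤ C` for all atoms `b`, and for pairwise disjoint subintervals `(xᵢ, yᵢ)`,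
with `hᵢ = (yᵢ − xᵢ)/2`,
`Σᵢ |T(χ_{[yᵢ−hᵢ, yᵢ+hᵢ)}) − T(χ_{[xᵢ−hᵢ, xᵢ+hᵢ)})| ≤ 2C Σᵢ (yᵢ − xᵢ)`. -/
theorem stmt8 (T : (ℝ → ℝ) →ₗ[ℝ] ℝ) (C : ℝ) (hC : 0 ≤ C)
    (hT : ∀ b : ℝ → ℝ, IsSpecialAtom b → |T b| ≤ C)
    (N : ℕ) (x y : Fin N → ℝ) (hxy : ∀ i, x i < y i)
    (hdisj : Pairwise fun i j => Disjoint (Set.Ioo (x i) (y i)) (Set.Ioo (x j) (y j))) :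
    ∑ i, |T ((Set.Ico (y i - (y i - x i) / 2) (y i + (y i - x i) / 2)).indicator
            (fun _ => (1 : ℝ)))
        - T ((Set.Ico (x i - (y i - x i) / 2) (x i + (y i - x i) / 2)).indicator
            (fun _ => (1 : ℝ)))|
      ≤ 2 * C * ∑ i, (y i - x i) := by
  rw [Finset.mul_sum]
  apply Finset.sum_le_sum
  intro i _
  set H : ℝ := y i - x i with hH
  have hHpos : 0 < H := by simp only [hH]; linarith [hxy i]
  set c : ℝ := x i + H / 2 with hc
  set b : ℝ → ℝ := fun ξ => (1 / (2 * H)) *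
      ((Set.Ico c (c + H)).indicator (fun _ => (1 : ℝ)) ξ -
       (Set.Ico (c - H) c).indicator (fun _ => (1 : ℝ)) ξ) with hb
  have hbatom : IsSpecialAtom b := ⟨c, H, hHpos, rfl⟩
  have hbT : |T b| ≤ C := hT b hbatom
  have eR : Set.Ico (y i - H / 2) (y i + H / 2) = Set.Ico c (c + H) := by
    congr 1 <;> (simp only [hc, hH]; ring)
  have eL : Set.Ico (x i - H / 2) (x i + H / 2) = Set.Ico (c - H) c := by
    congr 1 <;> (simp only [hc, hH]; ring)
  have hfun : ((Set.Ico c (c + H)).indicator (fun _ => (1 : ℝ))) -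
      ((Set.Ico (c - H) c).indicator (fun _ => (1 : ℝ))) = (2 * H) • b := by
    funext ξ
    simp only [Pi.sub_apply, Pi.smul_apply, hb, smul_eq_mul]
    field_simp
  have key : T ((Set.Ico (y i - H / 2) (y i + H / 2)).indicator (fun _ => (1 : ℝ)))
      - T ((Set.Ico (x i - H / 2) (x i + H / 2)).indicator (fun _ => (1 : ℝ)))
      = (2 * H) * T b := by
    rw [eR, eL, ← map_sub, hfun, T.map_smul, smul_eq_mul]
  rw [key, abs_mul, abs_of_pos (by linarith : (0:ℝ) < 2 * H)]
  calc 2 * H * |T b| ≤ 2 * H * C := by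
        exact mul_le_mul_of_nonneg_left hbT (by linarith)
    _ = 2 * C * H := by ring
end
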